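/- arXiv:1211.3689 — 7 statements merged into one kernel-verified Lean document; each statement's English description precedes it below -/
import Mathlib

section
/- For every finite simple graph G on n ≥ 1 vertices, ⌈n/(n − D_1(G))⌉ ≤ φ(G) ≤ ⌈n/(n − Δ(G))⌉, where Δ(G) is the maximum degree of G. -/
open Finset

/-- `W` is a *small set* in `G`: every vertex in `W` has degree at most `n - |W|`. -/
def SimpleGraph.IsSmallSet {V : Type*} [Fintype V] (G : SimpleGraph V)
    [DecidableRel G.Adj] (W : Finset V) : Prop :=
  ∀ v ∈ W, G.degree v ≤ Fintype.card V - W.card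

/-- `W` is a *δₖ-small set* in `G`: `∑_{v ∈ W} d(v)^k ≤ |W| (n - |W|)^k`. -/
def SimpleGraph.IsDeltaSmallSet {V : Type*} [Fintype V] (G : SimpleGraph V)
    [DecidableRel G.Adj] (k : ℕ) (W : Finset V) : Prop :=
  ∑ v ∈ W, (G.degree v) ^ k ≤ W.card * (Fintype.card V - W.card) ^ k

/-- `φ(G)`: least `r` such that `V(G)` decomposes into `r` small sets. -/
noncomputable def SimpleGraph.phi {V : Type*} [Fintype V] (G : SimpleGraph V)
    [DecidableRel G.Adj] : ℕ :=
  sInf {r | ∃ f : V → Fin r, ∀ i, G.IsSmallSet (Finset.univ.filter fun v => f v = i)}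

/-- `φ⁽ᵏ⁾(G)`: least `r` such that `V(G)` decomposes into `r` δₖ-small sets. -/
noncomputable def SimpleGraph.phiDelta {V : Type*} [Fintype V] (G : SimpleGraph V)
    [DecidableRel G.Adj] (k : ℕ) : ℕ :=
  sInf {r | ∃ f : V → Fin r, ∀ i, G.IsDeltaSmallSet k (Finset.univ.filter fun v => f v = i)}

/-- `D_k(G)`: the `k`-th power mean of the degrees of `G`. -/
noncomputable def SimpleGraph.degPowerMean {V : Type*} [Fintype V] (G : SimpleGraph V)
    [DecidableRel G.Adj] (k : ℕ) : ℝ :=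
  ((∑ v, (G.degree v : ℝ) ^ k) / (Fintype.card V : ℝ)) ^ ((1 : ℝ) / k)

/-- `α⁽ᵏ⁾(G)`: the maximum size of a δₖ-small set of `G`. -/
noncomputable def SimpleGraph.alphaDelta {V : Type*} [Fintype V] (G : SimpleGraph V)
    [DecidableRel G.Adj] (k : ℕ) : ℕ :=
  sSup {m | ∃ W : Finset V, G.IsDeltaSmallSet k W ∧ W.card = m}

/-- `S(G)`: the maximum size of a small set of `G`. -/
noncomputable def SimpleGraph.maxSmallSetSize {V : Type*} [Fintype V] (G : SimpleGraph V)
    [DecidableRel G.Adj] : ℕ :=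
  sSup {m | ∃ W : Finset V, G.IsSmallSet W ∧ W.card = m}

/-- `α(G)`: the independence number of `G`. -/
noncomputable def SimpleGraph.indepNumOrig {V : Type*} [Fintype V] (G : SimpleGraph V) : ℕ :=
  sSup {m | ∃ W : Finset V, (∀ v ∈ W, ∀ w ∈ W, ¬ G.Adj v w) ∧ W.card = m}

/-!
Upper bound: a set of at most `n - Δ` vertices is small, and the vertices can be cut into
`⌈n / (n - Δ)⌉` consecutive blocks of that size.

Lower bound: if `V` is split into `r` small sets of sizes `c₁, …, c_r`, the degree sum is at most
`∑ cᵢ (n - cᵢ) = n² - ∑ cᵢ²`, and Cauchy–Schwarz gives `∑ cᵢ² ≥ n² / r`; hence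
`n · D₁ ≤ n² (1 - 1/r)`, which rearranges to `n / (n - D₁) ≤ r`.
-/

theorem Fintype.exists_fin_map_card_fiber_le {α : Type*} [Fintype α] {r m : ℕ}
    (h : Fintype.card α ≤ r * m) :
    ∃ f : α → Fin r, ∀ i, (univ.filter fun a => f a = i).card ≤ m := by
  classical
  rcases Nat.eq_zero_or_pos m with rfl | hm
  · have : IsEmpty α := Fintype.card_eq_zero_iff.mp (by simpa using h)
    exact ⟨isEmptyElim, fun _ => by simp⟩
  let e := Fintype.equivFin α
  -- block `i` consists of the elements numbered `i * m, …, i * m + m - 1`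
  refine ⟨fun a => ⟨e a / m, Nat.div_lt_of_lt_mul ((e a).2.trans_le (by linarith))⟩,
    fun i => ?_⟩
  calc (univ.filter fun a => _).card ≤ (range m).card := by
        refine card_le_card_of_injOn (fun a => (e a : ℕ) % m)
          (fun a _ => mem_range.mpr (Nat.mod_lt _ hm)) fun a ha b hb hab => ?_
        simp only [coe_filter, mem_univ, true_and, Fin.ext_iff] at ha hb
        refine e.injective (Fin.ext ?_)
        rw [← Nat.div_add_mod (e a : ℕ) m, ← Nat.div_add_mod (e b : ℕ) m, ha, hb]
        simpa using hab
    _ = m := Finset.card_range m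

namespace SimpleGraph

variable {V : Type*} [Fintype V] (G : SimpleGraph V) [DecidableRel G.Adj]

theorem IsSmallSet.isDeltaSmallSet {G : SimpleGraph V} [DecidableRel G.Adj] {W : Finset V}
    (hW : G.IsSmallSet W) (k : ℕ) : G.IsDeltaSmallSet k W := by
  simpa [IsDeltaSmallSet] using
    sum_le_card_nsmul W _ _ fun v hv => Nat.pow_le_pow_left (hW v hv) k

theorem isSmallSet_of_card_le {W : Finset V} (hW : W.card ≤ Fintype.card V - G.maxDegree) :
    G.IsSmallSet W := fun v hv => by
  have := G.degree_le_maxDegree v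
  have := card_pos.mpr ⟨v, hv⟩
  omega

theorem phi_le {r : ℕ} (f : V → Fin r) (hf : ∀ i, G.IsSmallSet (univ.filter fun v => f v = i)) :
    G.phi ≤ r :=
  Nat.sInf_le ⟨f, hf⟩

theorem exists_isSmallSet_partition_of_card_le_mul {r : ℕ}
    (h : Fintype.card V ≤ r * (Fintype.card V - G.maxDegree)) :
    ∃ f : V → Fin r, ∀ i, G.IsSmallSet (univ.filter fun v => f v = i) := by
  obtain ⟨f, hf⟩ := Fintype.exists_fin_map_card_fiber_le h
  exact ⟨f, fun i => G.isSmallSet_of_card_le (hf i)⟩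

theorem exists_isSmallSet_partition_phi :
    ∃ f : V → Fin G.phi, ∀ i, G.IsSmallSet (univ.filter fun v => f v = i) := by
  have h : Fintype.card V ≤ Fintype.card V * (Fintype.card V - G.maxDegree) := by
    rcases isEmpty_or_nonempty V with hV | hV
    · simp
    · have := G.maxDegree_lt_card_verts
      exact Nat.le_mul_of_pos_right _ (by omega)
  exact Nat.sInf_mem (s := {r | ∃ f : V → Fin r, ∀ i, G.IsSmallSet (univ.filter fun v => f v = i)})
    ⟨_, G.exists_isSmallSet_partition_of_card_le_mul h⟩

theorem phi_le_ceil_div_card_sub_maxDegree :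
    G.phi ≤ ⌈(Fintype.card V : ℝ) / ((Fintype.card V : ℝ) - (G.maxDegree : ℝ))⌉₊ := by
  set n := Fintype.card V
  have h : n ≤ ⌈(n : ℝ) / ((n : ℝ) - (G.maxDegree : ℝ))⌉₊ * (n - G.maxDegree) := by
    rcases isEmpty_or_nonempty V with hV | hV
    · simp [n]
    have hΔ : G.maxDegree < n := G.maxDegree_lt_card_verts
    have hgap : (0 : ℝ) < (n : ℝ) - G.maxDegree := sub_pos.mpr (by exact_mod_cast hΔ)
    have hceil := Nat.le_ceil ((n : ℝ) / ((n : ℝ) - (G.maxDegree : ℝ)))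
    rw [div_le_iff₀ hgap] at hceil
    refine (Nat.cast_le (α := ℝ)).mp ?_
    rwa [Nat.cast_mul, Nat.cast_sub hΔ.le]
  obtain ⟨f, hf⟩ := G.exists_isSmallSet_partition_of_card_le_mul h
  exact G.phi_le f hf

theorem mul_sum_degree_le_of_isSmallSet_partition {r : ℕ} (f : V → Fin r)
    (hf : ∀ i, G.IsSmallSet (univ.filter fun v => f v = i)) :
    (r : ℝ) * ∑ v, (G.degree v : ℝ) ≤ (Fintype.card V : ℝ) ^ 2 * (r - 1) := by
  set n := Fintype.card V
  set c : Fin r → ℕ := fun i => (univ.filter fun v => f v = i).card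
  have hc_le : ∀ i, c i ≤ n := fun i => card_filter_le _ _
  have hsum_c : ∑ i, (c i : ℝ) = n := by
    exact_mod_cast (card_eq_sum_card_fiberwise fun v _ => mem_univ (f v)).symm
  have hdeg : ∑ v, (G.degree v : ℝ) ≤ ∑ i, (c i : ℝ) * (n - c i) := by
    rw [← sum_fiberwise_of_maps_to (g := f) fun v _ => mem_univ (f v)]
    refine sum_le_sum fun i _ => ?_
    have := (hf i).isDeltaSmallSet 1
    simp only [IsDeltaSmallSet, pow_one] at this
    rw [← Nat.cast_sub (hc_le i)]
    exact_mod_cast this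
  have hcs : (n : ℝ) ^ 2 ≤ r * ∑ i, (c i : ℝ) ^ 2 := by
    simpa [hsum_c] using sq_sum_le_card_mul_sum_sq (s := univ) (f := fun i => (c i : ℝ))
  have hexpand : ∑ i, (c i : ℝ) * (n - c i) = n ^ 2 - ∑ i, (c i : ℝ) ^ 2 := by
    simp only [mul_sub, sum_sub_distrib, ← sum_mul, hsum_c, sq]
  nlinarith [Nat.cast_nonneg (α := ℝ) r]

theorem degPowerMean_one :
    G.degPowerMean 1 = (∑ v, (G.degree v : ℝ)) / Fintype.card V := by
  simp [degPowerMean]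

theorem ceil_div_card_sub_degPowerMean_one_le {r : ℕ} (f : V → Fin r)
    (hf : ∀ i, G.IsSmallSet (univ.filter fun v => f v = i)) :
    ⌈(Fintype.card V : ℝ) / ((Fintype.card V : ℝ) - G.degPowerMean 1)⌉₊ ≤ r := by
  set n := Fintype.card V
  rcases isEmpty_or_nonempty V with hV | hV
  · simp [n]
  obtain ⟨v⟩ := hV
  have hn : (0 : ℝ) < n := by exact_mod_cast Fintype.card_pos_iff.mpr ⟨v⟩
  have hr : (0 : ℝ) < r := by exact_mod_cast (f v).pos
  have key := G.mul_sum_degree_le_of_isSmallSet_partition f hf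
  rw [degPowerMean_one]
  set S := ∑ v, (G.degree v : ℝ)
  have hgap : (n : ℝ) - S / n = (n ^ 2 - S) / n := by field_simp
  have hpos : (0 : ℝ) < n ^ 2 - S := by nlinarith
  rw [Nat.ceil_le, hgap, div_div_eq_mul_div, div_le_iff₀ hpos]
  nlinarith

end SimpleGraph

theorem stmt_0_general {V : Type*} [Fintype V] (G : SimpleGraph V) [DecidableRel G.Adj] :
    ⌈(Fintype.card V : ℝ) / ((Fintype.card V : ℝ) - G.degPowerMean 1)⌉₊ ≤ G.phi ∧
      G.phi ≤ ⌈(Fintype.card V : ℝ) / ((Fintype.card V : ℝ) - (G.maxDegree : ℝ))⌉₊ := by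
  obtain ⟨f, hf⟩ := G.exists_isSmallSet_partition_phi
  exact ⟨G.ceil_div_card_sub_degPowerMean_one_le f hf, G.phi_le_ceil_div_card_sub_maxDegree⟩

theorem stmt_0 {V : Type*} [Fintype V] (G : SimpleGraph V) [DecidableRel G.Adj]
    (hn : 1 ≤ Fintype.card V) :
    ⌈(Fintype.card V : ℝ) / ((Fintype.card V : ℝ) - G.degPowerMean 1)⌉₊ ≤ G.phi ∧
      G.phi ≤ ⌈(Fintype.card V : ℝ) / ((Fintype.card V : ℝ) - (G.maxDegree : ℝ))⌉₊ :=
  stmt_0_general G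
end

section
/- For every finite simple graph G on n vertices there exists a natural number k_0 = k_0(G) such that for all k ≥ k_0, every δ_k-small set of G is a small set of G. -/
open Finset

/-- `α(G)`: the independence number of `G`. -/
noncomputable def SimpleGraph.indepNumOfFinset {V : Type*} [Fintype V] (G : SimpleGraph V) : ℕ :=
  sSup {m | ∃ W : Finset V, (∀ v ∈ W, ∀ w ∈ W, ¬ G.Adj v w) ∧ W.card = m}

/-! A vertex of `W` of degree `d > b := n - |W|` alone contributes `d ^ k ≥ (b + 1) ^ k` to the
δₖ-sum, while the bound is `|W| * b ^ k`; since `(b / (b + 1)) ^ k → 0`, this fails for all large `k`,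
and there are only finitely many sets `W`. -/

open Filter Topology

theorem Nat.eventually_mul_pow_lt_succ_pow (m b : ℕ) :
    ∀ᶠ k in atTop, m * b ^ k < (b + 1) ^ k := by
  have hr : (b : ℝ) / (b + 1) < 1 := (div_lt_one (by positivity)).2 (lt_add_one _)
  have hlim : Tendsto (fun k : ℕ => (m : ℝ) * ((b : ℝ) / (b + 1)) ^ k) atTop (𝓝 0) := by
    simpa using (tendsto_pow_atTop_nhds_zero_of_lt_one (by positivity) hr).const_mul (m : ℝ)
  filter_upwards [hlim.eventually_lt_const zero_lt_one] with k hk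
  rw [div_pow, ← mul_div_assoc, div_lt_one (by positivity)] at hk
  exact_mod_cast hk

namespace SimpleGraph

variable {V : Type*} [Fintype V] (G : SimpleGraph V) [DecidableRel G.Adj]

theorem isSmallSet_of_isDeltaSmallSet {k : ℕ} {W : Finset V}
    (hk : W.card * (Fintype.card V - W.card) ^ k < (Fintype.card V - W.card + 1) ^ k)
    (hW : G.IsDeltaSmallSet k W) : G.IsSmallSet W := by
  intro v hv
  by_contra! hdeg
  have := calc
    (Fintype.card V - W.card + 1) ^ k ≤ G.degree v ^ k := Nat.pow_le_pow_left hdeg k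
    _ ≤ ∑ u ∈ W, G.degree u ^ k := single_le_sum (f := fun u => G.degree u ^ k) (by simp) hv
    _ ≤ W.card * (Fintype.card V - W.card) ^ k := hW
  omega

end SimpleGraph

theorem stmt_5 {V : Type*} [Fintype V] (G : SimpleGraph V) [DecidableRel G.Adj] :
    ∃ k₀ : ℕ, ∀ k, k₀ ≤ k → ∀ W : Finset V, G.IsDeltaSmallSet k W → G.IsSmallSet W := by
  have h : ∀ᶠ k in atTop, ∀ W : Finset V, G.IsDeltaSmallSet k W → G.IsSmallSet W :=
    eventually_all.2 fun W => (Nat.eventually_mul_pow_lt_succ_pow _ _).mono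
      fun _ hk => G.isSmallSet_of_isDeltaSmallSet hk
  exact eventually_atTop.1 h
end

section
/- Let r ≥ 1 be a natural number and let β_1, β_2, …, β_r ∈ [0,1] be real numbers with β_1 + β_2 + ⋯ + β_r = r − 1. Then for every natural number k with 1 ≤ k ≤ r, ∑_{i=1}^r (1 − β_i) β_i^k ≤ ((r−1)/r)^k. -/
open Finset

/-- `α(G)`: the independence number of `G`. -/
noncomputable def SimpleGraph.indepNum' {V : Type*} [Fintype V] (G : SimpleGraph V) : ℕ :=
  sSup {m | ∃ W : Finset V, (∀ v ∈ W, ∀ w ∈ W, ¬ G.Adj v w) ∧ W.card = m}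

/-!
With `t = (r - 1) / r`, the function `f(b) = (1 - b) b^k` lies below its tangent line at `t` on
all of `[0, ∞)` as soon as `k (1 - t) ≤ 1`, i.e. `k ≤ r`. Summing the tangent-line bound over the
`β i`, the linear part vanishes because the `β i` sum to `r t`, leaving `r f(t) = t^k`.
-/

/-- The slope `k t^(k-1) - (k+1) t^k` is `f'(t)`; at `k = 0` the truncated `k - 1` is harmless. -/
theorem one_sub_mul_pow_le_tangent (k : ℕ) {t b : ℝ} (hb : 0 ≤ b) (hkt : k * (1 - t) ≤ 1) :
    (1 - b) * b ^ k ≤ (1 - t) * t ^ k + (k * t ^ (k - 1) - (k + 1) * t ^ k) * (b - t) := by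
  induction k with
  | zero => simp
  | succ k ih =>
    rcases k with _ | k
    · norm_num
      nlinarith [sq_nonneg (b - t)]
    · push_cast at hkt ih ⊢
      have ht : 0 ≤ t := by nlinarith
      have ih := ih (by nlinarith)
      -- the tangent of `f_{k+2}` at `t` exceeds `b` times that of `f_{k+1}` by `-f'_{k+1}(t) (b - t)^2`
      have gap : 0 ≤ t ^ k * ((k + 2) * t - (k + 1)) * (b - t) ^ 2 := by
        have : 0 ≤ (k + 2) * t - (k + 1) := by linarith
        positivity
      calc (1 - b) * b ^ (k + 1 + 1) = b * ((1 - b) * b ^ (k + 1)) := by ring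
        _ ≤ b * ((1 - t) * t ^ (k + 1) + ((k + 1) * t ^ k - (k + 1 + 1) * t ^ (k + 1)) * (b - t)) :=
          mul_le_mul_of_nonneg_left ih hb
        _ ≤ _ := by linear_combination gap

theorem stmt_7_general (r k : ℕ) (hr : 1 ≤ r) (hkr : k ≤ r)
    (β : Fin r → ℝ) (hβ : ∀ i, β i ∈ Set.Icc (0 : ℝ) 1)
    (hsum : ∑ i, β i = (r : ℝ) - 1) :
    ∑ i, (1 - β i) * β i ^ k ≤ (((r : ℝ) - 1) / r) ^ k := by
  set t : ℝ := ((r : ℝ) - 1) / r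
  have hr₀ : (0 : ℝ) < r := by exact_mod_cast hr
  have h1t : 1 - t = 1 / r := by simp only [t]; field_simp; ring
  have hrt : (r : ℝ) * (1 - t) = 1 := by rw [h1t]; field_simp
  have hkt : k * (1 - t) ≤ 1 := by
    rw [h1t, mul_one_div, div_le_one hr₀]
    exact_mod_cast hkr
  set c : ℝ := k * t ^ (k - 1) - (k + 1) * t ^ k
  calc ∑ i, (1 - β i) * β i ^ k ≤ ∑ i, ((1 - t) * t ^ k + c * (β i - t)) :=
        sum_le_sum fun i _ => one_sub_mul_pow_le_tangent k (hβ i).1 hkt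
    _ = r * (1 - t) * t ^ k + c * (∑ i, β i - r * t) := by
        simp only [sum_add_distrib, ← mul_sum, sum_sub_distrib, sum_const, card_univ,
          Fintype.card_fin, nsmul_eq_mul]
        ring
    _ = t ^ k := by rw [hsum, hrt]; linear_combination c * hrt

theorem stmt_7 (r k : ℕ) (hr : 1 ≤ r) (hk : 1 ≤ k) (hkr : k ≤ r)
    (β : Fin r → ℝ) (hβ : ∀ i, β i ∈ Set.Icc (0 : ℝ) 1)
    (hsum : ∑ i, β i = (r : ℝ) - 1) :
    ∑ i, (1 - β i) * β i ^ k ≤ (((r : ℝ) - 1) / r) ^ k :=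
  stmt_7_general r k hr hkr β hβ hsum
end

section
/- Let G be a finite simple graph on n ≥ 1 vertices whose vertex set is partitioned into r pairwise disjoint δ_k-small sets V_1, …, V_r, and let k be a natural number with 1 ≤ k ≤ r. Then D_k(G) ≤ n(r−1)/r, i.e. ∑_{v∈V(G)} d(v)^k ≤ n · (n(r−1)/r)^k. -/
/-!
δₖ-smallness bounds the contribution of a part of size `a` by `f(a) = a (n - a)^k`. This `f` is
not concave on `[0, n]`, but for `k ≤ r` it lies below its tangent line at the average part size
`n / r`. Summing these tangent lines over the `r` parts, the linear terms cancel because the part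
sizes add up to `n`, which leaves `r f(n / r) = n (n (r - 1) / r)^k`. The power-mean bound follows
by taking `k`-th roots.
-/

open Finset

/-- `α(G)`: the independence number of `G`. -/
noncomputable def SimpleGraph.indepNumOld {V : Type*} [Fintype V] (G : SimpleGraph V) : ℕ :=
  sSup {m | ∃ W : Finset V, (∀ v ∈ W, ∀ w ∈ W, ¬ G.Adj v w) ∧ W.card = m}

section PowerInequalities

variable {R : Type*} [CommRing R] [LinearOrder R] [IsStrictOrderedRing R]

theorem sub_mul_pow_sub_pow_nonneg {x y : R} (hx : 0 ≤ x) (hy : 0 ≤ y) (m : ℕ) :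
    0 ≤ (x - y) * (x ^ m - y ^ m) := by
  rcases le_total x y with h | h
  · exact mul_nonneg_of_nonpos_of_nonpos (sub_nonpos.2 h)
      (sub_nonpos.2 (pow_le_pow_left₀ hx h m))
  · exact mul_nonneg (sub_nonneg.2 h) (sub_nonneg.2 (pow_le_pow_left₀ hy h m))

theorem add_one_mul_pow_mul_le {x y : R} (hx : 0 ≤ x) (hy : 0 ≤ y) (k : ℕ) :
    (k + 1) * x ^ k * y ≤ k * x ^ (k + 1) + y ^ (k + 1) := by
  induction k with
  | zero => simp
  | succ k ih =>
    have hstep := mul_le_mul_of_nonneg_left ih hx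
    have hmono := sub_mul_pow_sub_pow_nonneg hx hy (k + 1)
    push_cast
    linear_combination hstep + hmono

/-- Tangent line of `s ↦ (n - s) * s ^ k` at `s = c`. -/
theorem sub_mul_pow_le_tangent {n c s : R} {k : ℕ} (hk : 1 ≤ k) (hc : 0 < c) (hcn : c ≤ n)
    (hkn : k * (n - c) ≤ n) (hs : 0 ≤ s) :
    (n - s) * s ^ k ≤ (n - c) * c ^ k + c ^ (k - 1) * (k * (n - c) - c) * (s - c) := by
  obtain ⟨j, rfl⟩ := Nat.exists_eq_add_of_le' hk
  have hmono := mul_nonneg (sub_nonneg.2 hkn) (sub_mul_pow_sub_pow_nonneg hs hc.le (j + 1))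
  have hamgm := mul_nonneg (mul_nonneg (sub_nonneg.2 hcn) hs)
    (sub_nonneg.2 (add_one_mul_pow_mul_le hs hc.le j))
  -- `c` times the gap is `(n - k (n - c)) (s - c) (s^k - c^k) + (n - c) s (AM-GM gap)`.
  refine le_of_mul_le_mul_left ?_ hc
  push_cast at hmono hamgm ⊢
  linear_combination hmono + hamgm

end PowerInequalities

theorem sum_mul_sub_pow_le {R : Type*} [Field R] [LinearOrder R] [IsStrictOrderedRing R]
    {ι : Type*} [Fintype ι] {k : ℕ} (hk : 1 ≤ k) (hkι : k ≤ Fintype.card ι)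
    {a : ι → R} (ha : ∀ i, 0 ≤ a i) {n : R} (hn : ∑ i, a i = n) :
    ∑ i, a i * (n - a i) ^ k ≤ n * (n * (Fintype.card ι - 1) / Fintype.card ι) ^ k := by
  set r := Fintype.card ι
  have hk0 : k ≠ 0 := by omega
  have hle : ∀ i, a i ≤ n := fun i => hn ▸ single_le_sum (fun j _ => ha j) (mem_univ i)
  rcases (hk.trans hkι).eq_or_lt with hr1 | hr2
  · have : Subsingleton ι := Fintype.card_le_one_iff_subsingleton.1 hr1.ge
    have hai : ∀ i, a i = n := fun i => by rw [← hn, Fintype.sum_subsingleton _ i]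
    simp [hai, ← hr1, hk0]
  rcases (hn ▸ sum_nonneg fun i _ => ha i : 0 ≤ n).eq_or_lt with hn0 | hnpos
  · have hai : ∀ i, a i = 0 := fun i => le_antisymm (hn0 ▸ hle i) (ha i)
    simp [hai, ← hn0]
  have hr : (1 : R) < r := by exact_mod_cast hr2
  set c := n * (r - 1) / r
  have hc : 0 < c := div_pos (mul_pos hnpos (sub_pos.2 hr)) (by linarith)
  have hnc : n - c = n / r := by simp only [c]; field_simp; ring
  have hcn : c ≤ n := sub_nonneg.1 (hnc ▸ div_nonneg hnpos.le (by linarith))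
  have hkn : k * (n - c) ≤ n := by
    rw [hnc, mul_div_assoc', div_le_iff₀ (by linarith), mul_comm n]
    exact mul_le_mul_of_nonneg_right (by exact_mod_cast hkι) hnpos.le
  have hdeviation : ∑ i, ((n - a i) - c) = 0 := by
    rw [sum_sub_distrib, sum_sub_distrib, hn]
    simp only [sum_const, card_univ, nsmul_eq_mul, c]
    field_simp
    ring
  set K := c ^ (k - 1) * (k * (n - c) - c)
  calc ∑ i, a i * (n - a i) ^ k
      ≤ ∑ i, ((n - c) * c ^ k + K * ((n - a i) - c)) := by
        refine sum_le_sum fun i _ => ?_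
        simpa only [sub_sub_cancel] using
          sub_mul_pow_le_tangent hk hc hcn hkn (sub_nonneg.2 (hle i))
    _ = r * ((n - c) * c ^ k) := by
        rw [sum_add_distrib, sum_const, ← mul_sum, hdeviation, mul_zero, add_zero, card_univ,
          nsmul_eq_mul]
    _ = n * c ^ k := by rw [hnc]; field_simp

open Function in
theorem Finset.sum_univ_eq_sum_sum_of_cover {ι V M : Type*} [Fintype ι] [Fintype V]
    [AddCommMonoid M] {P : ι → Finset V} (hdisj : Pairwise (Disjoint on P))
    (hcover : ∀ v, ∃ i, v ∈ P i) (f : V → M) :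
    ∑ v, f v = ∑ i, ∑ v ∈ P i, f v := by
  classical
  rw [← sum_biUnion fun i _ j _ hij => hdisj hij]
  congr
  ext v
  simpa using hcover v

namespace SimpleGraph

variable {V : Type*} [Fintype V] {G : SimpleGraph V} [DecidableRel G.Adj] {k : ℕ}

theorem IsDeltaSmallSet.sum_degree_pow_le {W : Finset V} (hW : G.IsDeltaSmallSet k W) :
    ∑ v ∈ W, (G.degree v : ℝ) ^ k ≤ #W * ((Fintype.card V : ℝ) - #W) ^ k := by
  have hcast : ((∑ v ∈ W, G.degree v ^ k : ℕ) : ℝ) ≤ (#W * (Fintype.card V - #W) ^ k : ℕ) :=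
    Nat.cast_le.2 hW
  push_cast [Nat.cast_sub W.card_le_univ] at hcast
  exact hcast

theorem degPowerMean_le_of_sum_pow_le {D : ℝ} (hk : k ≠ 0) (hD : 0 ≤ D)
    (h : ∑ v, (G.degree v : ℝ) ^ k ≤ Fintype.card V * D ^ k) : G.degPowerMean k ≤ D := by
  have hmean : (∑ v, (G.degree v : ℝ) ^ k) / Fintype.card V ≤ D ^ k :=
    div_le_of_le_mul₀ (Nat.cast_nonneg _) (by positivity) (by linarith)
  calc G.degPowerMean k ≤ (D ^ k) ^ ((1 : ℝ) / k) :=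
        Real.rpow_le_rpow (by positivity) hmean (by positivity)
    _ = D := by rw [one_div, Real.pow_rpow_inv_natCast hD hk]

end SimpleGraph

theorem stmt_8_general {V : Type*} [Fintype V] (G : SimpleGraph V) [DecidableRel G.Adj]
    (k r : ℕ) (hk : 1 ≤ k) (hkr : k ≤ r)
    (P : Fin r → Finset V)
    (hdisj : ∀ i j, i ≠ j → Disjoint (P i) (P j))
    (hcover : ∀ v : V, ∃ i, v ∈ P i)
    (hsmall : ∀ i, G.IsDeltaSmallSet k (P i)) :
    G.degPowerMean k ≤ (Fintype.card V : ℝ) * ((r : ℝ) - 1) / r ∧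
      ∑ v, (G.degree v : ℝ) ^ k ≤
        (Fintype.card V : ℝ) * ((Fintype.card V : ℝ) * ((r : ℝ) - 1) / r) ^ k := by
  have hcard : ∑ i, ((P i).card : ℝ) = Fintype.card V := by
    simpa using (sum_univ_eq_sum_sum_of_cover hdisj hcover fun _ => (1 : ℝ)).symm
  have hsum : ∑ v, (G.degree v : ℝ) ^ k ≤
      (Fintype.card V : ℝ) * ((Fintype.card V : ℝ) * ((r : ℝ) - 1) / r) ^ k :=
    calc ∑ v, (G.degree v : ℝ) ^ k = ∑ i, ∑ v ∈ P i, (G.degree v : ℝ) ^ k :=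
          sum_univ_eq_sum_sum_of_cover hdisj hcover _
      _ ≤ ∑ i, ((P i).card : ℝ) * ((Fintype.card V : ℝ) - (P i).card) ^ k :=
          sum_le_sum fun i _ => (hsmall i).sum_degree_pow_le
      _ ≤ _ := by
          simpa using sum_mul_sub_pow_le hk (by simpa using hkr) (fun i => Nat.cast_nonneg _) hcard
  have hr : (1 : ℝ) ≤ r := by exact_mod_cast hk.trans hkr
  exact ⟨G.degPowerMean_le_of_sum_pow_le (by omega)
    (div_nonneg (mul_nonneg (Nat.cast_nonneg _) (by linarith)) (by linarith)) hsum, hsum⟩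

theorem stmt_8 {V : Type*} [Fintype V] (G : SimpleGraph V) [DecidableRel G.Adj]
    (hn : 1 ≤ Fintype.card V) (k r : ℕ) (hk : 1 ≤ k) (hkr : k ≤ r)
    (P : Fin r → Finset V)
    (hdisj : ∀ i j, i ≠ j → Disjoint (P i) (P j))
    (hcover : ∀ v : V, ∃ i, v ∈ P i)
    (hsmall : ∀ i, G.IsDeltaSmallSet k (P i)) :
    G.degPowerMean k ≤ (Fintype.card V : ℝ) * ((r : ℝ) - 1) / r ∧
      ∑ v, (G.degree v : ℝ) ^ k ≤
        (Fintype.card V : ℝ) * ((Fintype.card V : ℝ) * ((r : ℝ) - 1) / r) ^ k :=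
  stmt_8_general G k r hk hkr P hdisj hcover hsmall
end

section
/- Let G be a finite simple graph on n ≥ 1 vertices. Then for every natural number s ≥ 2, φ^(s)(G) ≥ n/(n − D_2(G)). -/
/-! Take a partition of `V` into `r = φ⁽ˢ⁾(G)` δₛ-small parts of sizes `aᵢ`. By the power-mean
inequality each part is also δ₂-small, so `∑ d(v)² ≤ ∑ aᵢ (n - aᵢ)²`. On `(-∞, n]` the cubic
`a ↦ a (n - a)²` lies below its tangent at any point `m ≤ n / 2`; taking `m = n / r`, the mean of the
`aᵢ`, gives `∑ aᵢ (n - aᵢ)² ≤ n (n - n / r)²`, i.e. `D₂(G) ≤ n - n / r`, which rearranges to the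
claim. -/

open Finset

/-- `α(G)`: the independence number of `G`. -/
noncomputable def SimpleGraph.indepNumAux {V : Type*} [Fintype V] (G : SimpleGraph V) : ℕ :=
  sSup {m | ∃ W : Finset V, (∀ v ∈ W, ∀ w ∈ W, ¬ G.Adj v w) ∧ W.card = m}

lemma sum_pow_le_card_mul_pow_of_le {ι : Type*} {W : Finset ι} {x : ι → ℝ} {c : ℝ} {k s : ℕ}
    (hx : ∀ i ∈ W, 0 ≤ x i) (hc : 0 ≤ c) (hk : 0 < k) (hks : k ≤ s)
    (h : ∑ i ∈ W, x i ^ s ≤ #W * c ^ s) :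
    ∑ i ∈ W, x i ^ k ≤ #W * c ^ k := by
  rcases W.eq_empty_or_nonempty with rfl | hW
  · simp
  have hW0 : (0 : ℝ) < #W := by exact_mod_cast hW.card_pos
  set p : ℝ := s / k with hp_def
  have hp : 1 ≤ p := by
    rw [hp_def, one_le_div (by exact_mod_cast hk)]
    exact_mod_cast hks
  have pow_rpow_p : ∀ y : ℝ, 0 ≤ y → (y ^ k) ^ p = y ^ s := fun y hy => by
    rw [← Real.rpow_natCast y k, ← Real.rpow_mul hy, hp_def,
      mul_div_cancel₀ _ (by exact_mod_cast hk.ne'), Real.rpow_natCast]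
  have jensen := Real.rpow_arith_mean_le_arith_mean_rpow W (fun _ => (#W : ℝ)⁻¹)
    (fun i => x i ^ k) (fun _ _ => by positivity) (by simp [hW0.ne'])
    (fun i hi => pow_nonneg (hx i hi) k) hp
  simp only [← mul_sum] at jensen
  rw [sum_congr rfl fun i hi => pow_rpow_p _ (hx i hi)] at jensen
  have key : ((#W : ℝ)⁻¹ * ∑ i ∈ W, x i ^ k) ^ p ≤ (c ^ k) ^ p := by
    rw [pow_rpow_p c hc]
    refine jensen.trans ?_
    rwa [inv_mul_le_iff₀ hW0]
  rwa [Real.rpow_le_rpow_iff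
    (mul_nonneg (by positivity) (sum_nonneg fun i hi => pow_nonneg (hx i hi) k))
    (by positivity) (by positivity),
    inv_mul_le_iff₀ hW0] at key

-- The gap between the tangent and the cubic is `(a - m)² (2N - 2m - a)`.
lemma mul_sub_sq_le_tangent {N m a : ℝ} (ha : a ≤ N) (hm : 2 * m ≤ N) :
    a * (N - a) ^ 2 ≤ m * (N - m) ^ 2 + (N - m) * (N - 3 * m) * (a - m) := by
  nlinarith [mul_nonneg (sq_nonneg (a - m)) (show 0 ≤ 2 * N - 2 * m - a by linarith)]

lemma sum_mul_sub_sq_le {ι : Type*} [Fintype ι] [Nonempty ι] {a : ι → ℝ} {N : ℝ}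
    (hN : 0 ≤ N) (ha : ∀ i, a i ≤ N) (hsum : ∑ i, a i = N) :
    ∑ i, a i * (N - a i) ^ 2 ≤ N * (N - N / Fintype.card ι) ^ 2 := by
  obtain hr | hr := (Nat.one_le_iff_ne_zero.mpr (Fintype.card_ne_zero (α := ι))).eq_or_lt
  -- A single part has size `N`, where the tangent argument does not apply but both sides vanish.
  · obtain ⟨i₀, hi₀⟩ := Fintype.card_eq_one_iff.mp hr.symm
    have hsum' := hsum
    rw [Fintype.sum_eq_single i₀ fun i hi => absurd (hi₀ i) hi] at hsum' ⊢
    simp [hsum', ← hr]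
  set r := Fintype.card ι
  have hr0 : (0 : ℝ) < r := by positivity
  have hm : 2 * (N / r) ≤ N := by
    rw [mul_div_assoc', div_le_iff₀ hr0]
    nlinarith [show (2 : ℝ) ≤ r by exact_mod_cast hr]
  calc ∑ i, a i * (N - a i) ^ 2
      ≤ ∑ i, (N / r * (N - N / r) ^ 2 + (N - N / r) * (N - 3 * (N / r)) * (a i - N / r)) :=
        sum_le_sum fun i _ => mul_sub_sq_le_tangent (ha i) hm
    _ = N * (N - N / r) ^ 2 := by
        rw [sum_add_distrib, ← mul_sum, ← mul_sum, sum_sub_distrib, hsum]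
        simp only [sum_const, card_univ, nsmul_eq_mul]
        field_simp
        ring

namespace SimpleGraph

variable {V : Type*} [Fintype V] (G : SimpleGraph V) [DecidableRel G.Adj]

lemma isDeltaSmallSet_iff_real {k : ℕ} {W : Finset V} :
    G.IsDeltaSmallSet k W ↔
      ∑ v ∈ W, (G.degree v : ℝ) ^ k ≤ #W * ((Fintype.card V : ℝ) - #W) ^ k := by
  rw [IsDeltaSmallSet, ← Nat.cast_sub W.card_le_univ, ← Nat.cast_le (α := ℝ)]
  push_cast
  rfl

variable {G} in
lemma IsDeltaSmallSet.of_le {k s : ℕ} {W : Finset V} (h : G.IsDeltaSmallSet s W)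
    (hk : 0 < k) (hks : k ≤ s) : G.IsDeltaSmallSet k W := by
  rw [isDeltaSmallSet_iff_real] at h ⊢
  exact sum_pow_le_card_mul_pow_of_le (fun _ _ => by positivity)
    (sub_nonneg.mpr (by exact_mod_cast W.card_le_univ)) hk hks h

lemma exists_partition_isDeltaSmallSet (k : ℕ) :
    ∃ f : V → Fin (G.phiDelta k), ∀ i, G.IsDeltaSmallSet k {v | f v = i} := by
  refine Nat.sInf_mem (s := {r | ∃ f : V → Fin r, ∀ i, G.IsDeltaSmallSet k {v | f v = i}})
    ⟨Fintype.card V, Fintype.equivFin V, fun i => ?_⟩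
  have : ({v | Fintype.equivFin V v = i} : Finset V) = {(Fintype.equivFin V).symm i} := by
    ext v
    simp [Equiv.eq_symm_apply]
  rw [IsDeltaSmallSet, this, sum_singleton, card_singleton, one_mul]
  exact Nat.pow_le_pow_left (Nat.le_sub_one_of_lt (G.degree_lt_card_verts _)) k

lemma degPowerMean_two_le {c : ℝ} (hc : 0 ≤ c)
    (h : ∑ v, (G.degree v : ℝ) ^ 2 ≤ Fintype.card V * c ^ 2) : G.degPowerMean 2 ≤ c := by
  rw [degPowerMean, Nat.cast_ofNat, ← Real.sqrt_eq_rpow, Real.sqrt_le_left hc]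
  exact div_le_of_le_mul₀ (Nat.cast_nonneg _) (by positivity) (by linarith)

lemma degPowerMean_two_le_of_partition [Nonempty V] {r : ℕ} (f : V → Fin r)
    (hf : ∀ i, G.IsDeltaSmallSet 2 {v | f v = i}) :
    G.degPowerMean 2 ≤ Fintype.card V - Fintype.card V / r := by
  set N : ℝ := (Fintype.card V : ℝ)
  have hr : 0 < r := Fin.pos_iff_nonempty.mpr ⟨f (Classical.arbitrary V)⟩
  have : Nonempty (Fin r) := Fin.pos_iff_nonempty.mp hr
  have hN : 0 ≤ N := Nat.cast_nonneg _
  have hcard : ∑ i, (#{v | f v = i} : ℝ) = N := by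
    rw [← Nat.cast_sum, ← card_eq_sum_card_fiberwise fun v _ => mem_univ (f v), card_univ]
  refine G.degPowerMean_two_le (sub_nonneg.mpr (div_le_self hN (by exact_mod_cast hr))) ?_
  calc ∑ v, (G.degree v : ℝ) ^ 2
      = ∑ i, ∑ v ∈ {v | f v = i}, (G.degree v : ℝ) ^ 2 := (sum_fiberwise _ _ _).symm
    _ ≤ ∑ i, (#{v | f v = i} : ℝ) * (N - #{v | f v = i}) ^ 2 :=
        sum_le_sum fun i _ => G.isDeltaSmallSet_iff_real.mp (hf i)
    _ ≤ N * (N - N / r) ^ 2 := by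
        simpa using sum_mul_sub_sq_le hN (fun _ => Nat.cast_le.mpr (card_le_univ _)) hcard

end SimpleGraph

theorem stmt_11 {V : Type*} [Fintype V] (G : SimpleGraph V) [DecidableRel G.Adj]
    (hn : 1 ≤ Fintype.card V) (s : ℕ) (hs : 2 ≤ s) :
    (G.phiDelta s : ℝ) ≥
      (Fintype.card V : ℝ) / ((Fintype.card V : ℝ) - G.degPowerMean 2) := by
  have : Nonempty V := Fintype.card_pos_iff.mp hn
  obtain ⟨f, hf⟩ := G.exists_partition_isDeltaSmallSet s
  have hD := G.degPowerMean_two_le_of_partition f fun i => (hf i).of_le two_pos hs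
  have hN : (0 : ℝ) < Fintype.card V := by exact_mod_cast hn
  have hr : (0 : ℝ) < G.phiDelta s := by
    exact_mod_cast Fin.pos_iff_nonempty.mpr ⟨f (Classical.arbitrary V)⟩
  have hgap : (Fintype.card V : ℝ) / G.phiDelta s ≤ Fintype.card V - G.degPowerMean 2 := by
    linarith
  rw [ge_iff_le, div_le_iff₀ ((div_pos hN hr).trans_le hgap), ← div_le_iff₀' hr]
  exact hgap
end

section
/- For every finite simple graph G there exists a natural number k_0 = k_0(G) such that α^(k)(G) = S(G) for all k ≥ k_0 (so the nonincreasing sequence α^(1)(G) ≥ α^(2)(G) ≥ ⋯ stabilizes at S(G)). -/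
open Finset

/-- `α(G)`: the independence number of `G`. -/
noncomputable def SimpleGraph.indepNumFin {V : Type*} [Fintype V] (G : SimpleGraph V) : ℕ :=
  sSup {m | ∃ W : Finset V, (∀ v ∈ W, ∀ w ∈ W, ¬ G.Adj v w) ∧ W.card = m}

/- A set that is not small contains a vertex of degree at least `m + 1`, where `m = n - |W|`;
for `k > n²` the single term `(m + 1)^k` already exceeds `n m^k ≥ |W| m^k` by Bernoulli's
inequality, so for such `k` the δₖ-small sets are exactly the small sets. -/

theorem Nat.mul_pow_lt_add_one_pow {n m k : ℕ} (hk : n * m < k) : n * m ^ k < (m + 1) ^ k := by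
  obtain ⟨j, rfl⟩ : ∃ j, k = j + 1 := ⟨k - 1, by omega⟩
  rcases Nat.eq_zero_or_pos m with rfl | hm
  · simp
  · calc n * m ^ (j + 1) = n * m * m ^ j := by ring
      _ < (j + 1) * m ^ j := Nat.mul_lt_mul_of_pos_right hk (Nat.pow_pos hm)
      _ ≤ m ^ (j + 1) + (j + 1) * m ^ j := Nat.le_add_left _ _
      _ ≤ (m + 1) ^ (j + 1) := by
        simpa using pow_add_mul_le_add_pow (a := m) (b := 1) (Nat.zero_le _) (Nat.zero_le _) (j + 1)

namespace SimpleGraph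

variable {V : Type*} [Fintype V] {G : SimpleGraph V} [DecidableRel G.Adj] {W : Finset V}

theorem IsSmallSet.isDeltaSmallSet_s16 (h : G.IsSmallSet W) (k : ℕ) : G.IsDeltaSmallSet k W :=
  calc ∑ v ∈ W, G.degree v ^ k ≤ ∑ _v ∈ W, (Fintype.card V - #W) ^ k :=
        sum_le_sum fun v hv => Nat.pow_le_pow_left (h v hv) k
    _ = #W * (Fintype.card V - #W) ^ k := by rw [sum_const, smul_eq_mul]

theorem IsDeltaSmallSet.isSmallSet {k : ℕ} (hk : Fintype.card V * Fintype.card V < k)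
    (h : G.IsDeltaSmallSet k W) : G.IsSmallSet W := by
  intro v hv
  by_contra! hd
  set m := Fintype.card V - #W
  have hmk : Fintype.card V * m < k := (Nat.mul_le_mul_left _ (Nat.sub_le _ _)).trans_lt hk
  have := calc #W * m ^ k ≤ Fintype.card V * m ^ k := Nat.mul_le_mul_right _ (card_le_univ W)
    _ < (m + 1) ^ k := Nat.mul_pow_lt_add_one_pow hmk
    _ ≤ G.degree v ^ k := Nat.pow_le_pow_left hd k
    _ ≤ ∑ w ∈ W, G.degree w ^ k := single_le_sum (f := fun w => G.degree w ^ k) (by simp) hv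
  exact this.not_ge h

theorem isDeltaSmallSet_iff_isSmallSet {k : ℕ} (hk : Fintype.card V * Fintype.card V < k) :
    G.IsDeltaSmallSet k W ↔ G.IsSmallSet W :=
  ⟨IsDeltaSmallSet.isSmallSet hk, fun h => h.isDeltaSmallSet_s16 k⟩

end SimpleGraph

theorem stmt_16 {V : Type*} [Fintype V] (G : SimpleGraph V) [DecidableRel G.Adj] :
    ∃ k₀ : ℕ, ∀ k, k₀ ≤ k → G.alphaDelta k = G.maxSmallSetSize := by
  refine ⟨Fintype.card V * Fintype.card V + 1, fun k hk => ?_⟩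
  simp only [SimpleGraph.alphaDelta, SimpleGraph.maxSmallSetSize,
    SimpleGraph.isDeltaSmallSet_iff_isSmallSet (Nat.lt_of_succ_le hk)]
end

section
/- Let G be a finite simple graph on n vertices with e(G) edges, let A ⊆ V(G) be a δ_1-small set of G with V(G) \ A nonempty, and let s = D_1(V(G) \ A) be the average degree of the vertices outside A. Then |A| ≤ (n − s)/2 + √((n − s)²/4 + n·s − 2·e(G)). -/
/-!
Splitting the degree sum `2 e(G) = ∑_A d + ∑_{V∖A} d` and bounding the first part by
`|A| (n - |A|)` (δ₁-smallness) and the second by `s (n - |A|)` gives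
`2 e(G) ≤ (|A| + s)(n - |A|)`, a quadratic inequality in `|A|`; its larger root is the bound.
-/

open Finset

/-- `α(G)`: the independence number of `G`. -/
noncomputable def SimpleGraph.indepNumSmall {V : Type*} [Fintype V] (G : SimpleGraph V) : ℕ :=
  sSup {m | ∃ W : Finset V, (∀ v ∈ W, ∀ w ∈ W, ¬ G.Adj v w) ∧ W.card = m}

lemma le_half_add_sqrt_of_sq_sub_mul_le {x b c : ℝ} (h : x ^ 2 - b * x ≤ c) :
    x ≤ b / 2 + √(b ^ 2 / 4 + c) := by
  have hsq : (x - b / 2) ^ 2 ≤ b ^ 2 / 4 + c := by linarith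
  linarith [le_abs_self (x - b / 2), Real.abs_le_sqrt hsq]

namespace SimpleGraph

variable {V : Type*} [Fintype V] {G : SimpleGraph V} [DecidableRel G.Adj]

lemma IsDeltaSmallSet.sum_degree_le {A : Finset V} (hA : G.IsDeltaSmallSet 1 A) :
    ∑ v ∈ A, (G.degree v : ℝ) ≤ A.card * (Fintype.card V - A.card) := by
  simp only [IsDeltaSmallSet, pow_one] at hA
  rw [← Nat.cast_sub (card_le_univ A)]
  exact_mod_cast hA

variable [DecidableEq V]

variable (G) in
lemma sum_degree_add_sum_degree_sdiff (A : Finset V) :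
    ∑ v ∈ A, (G.degree v : ℝ) + ∑ v ∈ univ \ A, (G.degree v : ℝ) =
      2 * G.edgeFinset.card := by
  rw [add_comm, sum_sdiff (subset_univ A)]
  exact_mod_cast G.sum_degrees_eq_twice_card_edges

lemma IsDeltaSmallSet.two_mul_card_edgeFinset_le {A : Finset V} (hA : G.IsDeltaSmallSet 1 A) :
    2 * (G.edgeFinset.card : ℝ) ≤
      (A.card + (∑ v ∈ univ \ A, (G.degree v : ℝ)) / (univ \ A).card) *
        (Fintype.card V - A.card) := by
  -- `∑ / card * card = ∑` also when `univ \ A` is empty, both sides being `0`.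
  have hmean : (∑ v ∈ univ \ A, (G.degree v : ℝ)) / (univ \ A).card * (univ \ A).card =
      ∑ v ∈ univ \ A, (G.degree v : ℝ) :=
    div_mul_cancel_of_imp fun h ↦ by
      rw [Nat.cast_eq_zero, card_eq_zero] at h
      rw [h, sum_empty]
  have hcard : ((univ \ A).card : ℝ) = Fintype.card V - A.card := by
    rw [card_univ_sdiff, Nat.cast_sub (card_le_univ A)]
  have hsumA := hA.sum_degree_le
  rw [← hcard] at hsumA ⊢
  linarith [G.sum_degree_add_sum_degree_sdiff A]

end SimpleGraph

theorem stmt_19_general {V : Type*} [Fintype V] [DecidableEq V] (G : SimpleGraph V)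
    [DecidableRel G.Adj] (A : Finset V) (hA : G.IsDeltaSmallSet 1 A)
    (s : ℝ)
    (hs : s = (∑ v ∈ Finset.univ \ A, (G.degree v : ℝ)) / ((Finset.univ \ A).card : ℝ)) :
    (A.card : ℝ) ≤ ((Fintype.card V : ℝ) - s) / 2 +
      Real.sqrt (((Fintype.card V : ℝ) - s) ^ 2 / 4 +
        (Fintype.card V : ℝ) * s - 2 * (G.edgeFinset.card : ℝ)) := by
  have hedges := hA.two_mul_card_edgeFinset_le
  rw [← hs] at hedges
  rw [add_sub_assoc]
  exact le_half_add_sqrt_of_sq_sub_mul_le (by linarith)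

theorem stmt_19 {V : Type*} [Fintype V] [DecidableEq V] (G : SimpleGraph V)
    [DecidableRel G.Adj] (A : Finset V) (hA : G.IsDeltaSmallSet 1 A)
    (hne : (Finset.univ \ A).Nonempty) (s : ℝ)
    (hs : s = (∑ v ∈ Finset.univ \ A, (G.degree v : ℝ)) / ((Finset.univ \ A).card : ℝ)) :
    (A.card : ℝ) ≤ ((Fintype.card V : ℝ) - s) / 2 +
      Real.sqrt (((Fintype.card V : ℝ) - s) ^ 2 / 4 +
        (Fintype.card V : ℝ) * s - 2 * (G.edgeFinset.card : ℝ)) :=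
  stmt_19_general G A hA s hs
end
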